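/- arXiv:1404.7328 — 4 statements merged into one kernel-verified Lean document; each statement's English description precedes it below -/
import Mathlib

section
/- Let T_1,…,T_N : ℓ^∞_M → ℝ be bounded linear functionals, let 𝒯 = {T_n : 1 ≤ n ≤ N}, and let A : ℓ^∞_M → ℓ^∞_N be defined by A x = (T_1 x, …, T_N x). Then the R-bound of 𝒯 equals the Rademacher cotype-2 constant of A: ℛ(𝒯) = C_2(A). -/
open MeasureTheory ProbabilityTheory Filter ENNReal

noncomputable section

/-- `ξ` is an independent family of Rademacher random variables on `(Ω, μ)`,
i.e. `P(ξ i = 1) = P(ξ i = -1) = 1/2`. -/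
def IsRademacherFam {ι Ω : Type*} [MeasurableSpace Ω] (μ : Measure Ω) (ξ : ι → Ω → ℝ) : Prop :=
  IsProbabilityMeasure μ ∧ (∀ i, Measurable (ξ i)) ∧
    iIndepFun ξ μ ∧
    ∀ i, μ.map (ξ i) =
      (2 : ℝ≥0∞)⁻¹ • Measure.dirac (1 : ℝ) + (2 : ℝ≥0∞)⁻¹ • Measure.dirac (-1 : ℝ)

/-- `ξ` is an independent family of standard Gaussian random variables on `(Ω, μ)`. -/
def IsGaussianFam {ι Ω : Type*} [MeasurableSpace Ω] (μ : Measure Ω) (ξ : ι → Ω → ℝ) : Prop :=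
  IsProbabilityMeasure μ ∧ (∀ i, Measurable (ξ i)) ∧
    iIndepFun ξ μ ∧
    ∀ i, μ.map (ξ i) = gaussianReal 0 1

/-- The randomized boundedness condition for a family of operators `𝒯 ⊆ L(X,Y)`, with
constant `C`, relative to the random sequence `ξ`:
`(E ‖∑ ξ_n T_n x_n‖²)^{1/2} ≤ C (E ‖∑ ξ_n x_n‖²)^{1/2}` for all finite choices
`T_n ∈ 𝒯` (repetitions allowed) and `x_n ∈ X`.  For `ξ` a Rademacher sequence this is
`R`-boundedness with constant `C`; for `ξ` a Gaussian sequence it is `γ`-boundedness. -/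
def BoundedWith {X Y Ω : Type*} [NormedAddCommGroup X] [NormedSpace ℝ X]
    [NormedAddCommGroup Y] [NormedSpace ℝ Y] [MeasurableSpace Ω]
    (μ : Measure Ω) (ξ : ℕ → Ω → ℝ) (𝒯 : Set (X →L[ℝ] Y)) (C : ℝ) : Prop :=
  ∀ (N : ℕ) (T : Fin N → X →L[ℝ] Y) (x : Fin N → X), (∀ n, T n ∈ 𝒯) →
    Real.sqrt (∫ ω, ‖∑ n : Fin N, ξ n.1 ω • T n (x n)‖ ^ 2 ∂μ) ≤
      C * Real.sqrt (∫ ω, ‖∑ n : Fin N, ξ n.1 ω • x n‖ ^ 2 ∂μ)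

/-- The family `𝒯` is bounded (R- or γ-, according to `ξ`). -/
def IsBoundedFam {X Y Ω : Type*} [NormedAddCommGroup X] [NormedSpace ℝ X]
    [NormedAddCommGroup Y] [NormedSpace ℝ Y] [MeasurableSpace Ω]
    (μ : Measure Ω) (ξ : ℕ → Ω → ℝ) (𝒯 : Set (X →L[ℝ] Y)) : Prop :=
  ∃ C : ℝ, 0 ≤ C ∧ BoundedWith μ ξ 𝒯 C

/-- The bound (R-bound or γ-bound according to `ξ`) of the family `𝒯`, defined as the least
admissible constant. -/
def boundConst {X Y Ω : Type*} [NormedAddCommGroup X] [NormedSpace ℝ X]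
    [NormedAddCommGroup Y] [NormedSpace ℝ Y] [MeasurableSpace Ω]
    (μ : Measure Ω) (ξ : ℕ → Ω → ℝ) (𝒯 : Set (X →L[ℝ] Y)) : ℝ :=
  sInf {C : ℝ | 0 ≤ C ∧ BoundedWith μ ξ 𝒯 C}

/-- `X` has cotype `q` (with respect to the random sequence `ξ`):
`(∑ ‖x_n‖^q)^{1/q} ≤ C (E‖∑ ξ_n x_n‖²)^{1/2}`. -/
def HasCotype (X : Type*) [NormedAddCommGroup X] [NormedSpace ℝ X] {Ω : Type*}
    [MeasurableSpace Ω] (μ : Measure Ω) (ξ : ℕ → Ω → ℝ) (q : ℝ) : Prop :=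
  ∃ C : ℝ, 0 ≤ C ∧ ∀ (N : ℕ) (x : Fin N → X),
    (∑ n, ‖x n‖ ^ q) ^ (1 / q) ≤ C * Real.sqrt (∫ ω, ‖∑ n : Fin N, ξ n.1 ω • x n‖ ^ 2 ∂μ)

/-- `X` has finite cotype: it has cotype `q` for some `q ∈ [2, ∞)`. -/
def HasFiniteCotype (X : Type*) [NormedAddCommGroup X] [NormedSpace ℝ X] {Ω : Type*}
    [MeasurableSpace Ω] (μ : Measure Ω) (ξ : ℕ → Ω → ℝ) : Prop :=
  ∃ q : ℝ, 2 ≤ q ∧ HasCotype X μ ξ q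


/-- The cotype-2 condition for an operator `A : X → Y`, with constant `C`, relative to the
random sequence `ξ`: `(∑ ‖A x_i‖²)^{1/2} ≤ C (E‖∑ ξ_i x_i‖²)^{1/2}`.  For a Rademacher
sequence `ξ` this is the Rademacher cotype-2 condition, for a Gaussian sequence the
Gaussian cotype-2 condition. -/
def Cotype2With {X Y Ω : Type*} [NormedAddCommGroup X] [NormedSpace ℝ X]
    [NormedAddCommGroup Y] [NormedSpace ℝ Y] [MeasurableSpace Ω]
    (μ : Measure Ω) (ξ : ℕ → Ω → ℝ) (A : X →L[ℝ] Y) (C : ℝ) : Prop :=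
  ∀ (k : ℕ) (x : Fin k → X),
    Real.sqrt (∑ i, ‖A (x i)‖ ^ 2) ≤
      C * Real.sqrt (∫ ω, ‖∑ i : Fin k, ξ i.1 ω • x i‖ ^ 2 ∂μ)

/-- The cotype-2 constant of an operator (Rademacher or Gaussian according to `ξ`). -/
def cotype2Const {X Y Ω : Type*} [NormedAddCommGroup X] [NormedSpace ℝ X]
    [NormedAddCommGroup Y] [NormedSpace ℝ Y] [MeasurableSpace Ω]
    (μ : Measure Ω) (ξ : ℕ → Ω → ℝ) (A : X →L[ℝ] Y) : ℝ :=
  sInf {C : ℝ | 0 ≤ C ∧ Cotype2With μ ξ A C}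

/-- The `ℓ²`-boundedness condition with constant `C` for a family of functionals on
`ℓ^∞_M = (Fin M → ℝ)` (with the sup norm):
`(∑ |S_i x_i|²)^{1/2} ≤ C · max_m (∑ |x_i(m)|²)^{1/2}`. -/
def Ell2BoundedWith (M : ℕ) (𝒯 : Set ((Fin M → ℝ) →L[ℝ] ℝ)) (C : ℝ) : Prop :=
  ∀ (k : ℕ) (S : Fin k → (Fin M → ℝ) →L[ℝ] ℝ) (x : Fin k → Fin M → ℝ), (∀ i, S i ∈ 𝒯) →
    Real.sqrt (∑ i, S i (x i) ^ 2) ≤ C * Real.sqrt (⨆ m : Fin M, ∑ i, x i m ^ 2)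

/-- The `ℓ²`-bound of a family of functionals on `ℓ^∞_M`. -/
def ell2BoundConst (M : ℕ) (𝒯 : Set ((Fin M → ℝ) →L[ℝ] ℝ)) : ℝ :=
  sInf {C : ℝ | 0 ≤ C ∧ Ell2BoundedWith M 𝒯 C}

/-- The 2-summing condition with constant `C` for an operator `A : ℓ^∞_M → Y`; recall that
for the domain `ℓ^∞_M` the supremum over the dual unit ball equals the maximum over the
coordinates, i.e. `(∑ ‖A x_i‖²)^{1/2} ≤ C · max_m (∑ |x_i(m)|²)^{1/2}`. -/
def Pi2With (M : ℕ) {Y : Type*} [NormedAddCommGroup Y] [NormedSpace ℝ Y]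
    (A : (Fin M → ℝ) →L[ℝ] Y) (C : ℝ) : Prop :=
  ∀ (k : ℕ) (x : Fin k → Fin M → ℝ),
    Real.sqrt (∑ i, ‖A (x i)‖ ^ 2) ≤ C * Real.sqrt (⨆ m : Fin M, ∑ i, x i m ^ 2)

/-- The 2-summing norm `π₂(A)` of an operator `A : ℓ^∞_M → Y`. -/
def pi2Const (M : ℕ) {Y : Type*} [NormedAddCommGroup Y] [NormedSpace ℝ Y]
    (A : (Fin M → ℝ) →L[ℝ] Y) : ℝ :=
  sInf {C : ℝ | 0 ≤ C ∧ Pi2With M A C}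

/-- `X` has (Rademacher) type `p` with respect to the random sequence `ξ`:
`(E‖∑ ξ_n x_n‖^p)^{1/p} ≤ τ (∑ ‖x_n‖^p)^{1/p}`. -/
def HasTypeP (X : Type*) [NormedAddCommGroup X] [NormedSpace ℝ X] {Ω : Type*}
    [MeasurableSpace Ω] (μ : Measure Ω) (ξ : ℕ → Ω → ℝ) (p : ℝ) : Prop :=
  ∃ τ : ℝ, 0 ≤ τ ∧ ∀ (N : ℕ) (x : Fin N → X),
    (∫ ω, ‖∑ n : Fin N, ξ n.1 ω • x n‖ ^ p ∂μ) ^ (1 / p) ≤ τ * (∑ n, ‖x n‖ ^ p) ^ (1 / p)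

/-- `X` has nontrivial type: type `p` for some `p ∈ (1, 2]`. -/
def HasNontrivialType (X : Type*) [NormedAddCommGroup X] [NormedSpace ℝ X] {Ω : Type*}
    [MeasurableSpace Ω] (μ : Measure Ω) (ξ : ℕ → Ω → ℝ) : Prop :=
  ∃ p : ℝ, 1 < p ∧ p ≤ 2 ∧ HasTypeP X μ ξ p

/-- The Banach space adjoint `T* : Y* → X*` of `T : X → Y`, given by `T* y* = y* ∘ T`. -/
def banachAdjoint {X Y : Type*} [NormedAddCommGroup X] [NormedSpace ℝ X]
    [NormedAddCommGroup Y] [NormedSpace ℝ Y] (T : X →L[ℝ] Y) :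
    (Y →L[ℝ] ℝ) →L[ℝ] (X →L[ℝ] ℝ) :=
  (ContinuousLinearMap.compSL X Y ℝ (RingHom.id ℝ) (RingHom.id ℝ)).flip T


/-!
For scalar coefficients the Rademacher functions are orthonormal, so
`E|∑ rᵢ Sᵢ xᵢ|² = ∑ |Sᵢ xᵢ|²`. Choosing each `Sᵢ = T_{n(i)}` with `n(i)` a coordinate where
`A xᵢ` attains its sup norm makes this `∑ ‖A xᵢ‖²`, and no other choice makes it larger. Hence a
constant `C ≥ 0` witnesses the `R`-boundedness of `{T_n}` exactly when it witnesses the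
cotype-2 inequality of `A`, and the two infima coincide.
-/

namespace IsRademacherFam

variable {ι Ω : Type*} [MeasurableSpace Ω] {μ : Measure Ω} {r : ι → Ω → ℝ}

lemma ae_abs_eq_one (hr : IsRademacherFam μ r) (i : ι) : ∀ᵐ ω ∂μ, |r i ω| = 1 := by
  have hs : MeasurableSet {x : ℝ | |x| = 1} := measurable_abs (measurableSet_singleton 1)
  refine ae_of_ae_map (p := fun x : ℝ => |x| = 1) (hr.2.1 i).aemeasurable ?_
  rw [hr.2.2.2 i, ae_add_measure_iff]
  exact ⟨Measure.ae_smul_measure ((ae_dirac_iff hs).2 (by simp)) _,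
    Measure.ae_smul_measure ((ae_dirac_iff hs).2 (by simp)) _⟩

lemma integral_eq_zero (hr : IsRademacherFam μ r) (i : ι) : ∫ ω, r i ω ∂μ = 0 := by
  rw [← integral_map (f := fun x : ℝ => x) (hr.2.1 i).aemeasurable aestronglyMeasurable_id,
    hr.2.2.2 i, integral_add_measure ((integrable_dirac (by simp)).smul_measure (by simp))
      ((integrable_dirac (by simp)).smul_measure (by simp))]
  simp

lemma integrable_mul (hr : IsRademacherFam μ r) (i j : ι) :
    Integrable (fun ω => r i ω * r j ω) μ := by
  have := hr.1
  refine (integrable_const (1 : ℝ)).mono' ((hr.2.1 i).mul (hr.2.1 j)).aestronglyMeasurable ?_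
  filter_upwards [hr.ae_abs_eq_one i, hr.ae_abs_eq_one j] with ω hi hj
  rw [Real.norm_eq_abs, abs_mul, hi, hj, one_mul]

lemma integral_mul [DecidableEq ι] (hr : IsRademacherFam μ r) (i j : ι) :
    ∫ ω, r i ω * r j ω ∂μ = if i = j then 1 else 0 := by
  split_ifs with hij
  · subst hij
    have := hr.1
    rw [integral_congr_ae ((hr.ae_abs_eq_one i).mono fun ω h => by
      rw [← abs_mul_abs_self, h, one_mul])]
    simp
  · rw [(hr.2.2.1.indepFun hij).integral_fun_mul_eq_mul_integral (hr.2.1 i).aestronglyMeasurable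
      (hr.2.1 j).aestronglyMeasurable, hr.integral_eq_zero, zero_mul]

lemma integral_norm_sum_smul_sq {r : ℕ → Ω → ℝ} (hr : IsRademacherFam μ r) {k : ℕ}
    (a : Fin k → ℝ) :
    ∫ ω, ‖∑ i : Fin k, r i.1 ω • a i‖ ^ 2 ∂μ = ∑ i, a i ^ 2 := by
  have hexpand : ∀ ω, ‖∑ i : Fin k, r i.1 ω • a i‖ ^ 2 =
      ∑ i : Fin k, ∑ j : Fin k, a i * a j * (r i.1 ω * r j.1 ω) := fun ω => by
    rw [Real.norm_eq_abs, sq_abs, sq, Finset.sum_mul_sum]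
    simp only [smul_eq_mul]
    exact Finset.sum_congr rfl fun i _ => Finset.sum_congr rfl fun j _ => by ring
  simp_rw [hexpand]
  rw [integral_finsetSum _ fun i _ => integrable_finsetSum _ fun j _ =>
    (hr.integrable_mul _ _).const_mul _]
  refine Finset.sum_congr rfl fun i _ => ?_
  rw [integral_finsetSum _ fun j _ => (hr.integrable_mul _ _).const_mul _]
  simp [integral_const_mul, hr.integral_mul, Fin.val_inj, sq]

end IsRademacherFam

theorem Pi.exists_norm_apply_eq_norm {ι E : Type*} [Fintype ι] [Nonempty ι]
    [SeminormedAddGroup E] (f : ι → E) : ∃ n, ‖f n‖ = ‖f‖ := by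
  obtain ⟨n, hn⟩ := Finite.exists_max fun n => ‖f n‖
  exact ⟨n, le_antisymm (norm_le_pi_norm f n) ((pi_norm_le_iff_of_nonneg (norm_nonneg _)).2 hn)⟩

section FunctionalFamily

variable {X Ω ι : Type*} [NormedAddCommGroup X] [NormedSpace ℝ X] [Fintype ι]
  [MeasurableSpace Ω] {μ : Measure Ω} {r : ℕ → Ω → ℝ} {T : ι → X →L[ℝ] ℝ}
  {A : X →L[ℝ] (ι → ℝ)} {C : ℝ}

theorem Cotype2With.boundedWith_range (hr : IsRademacherFam μ r)
    (hA : ∀ x n, A x n = T n x) (h : Cotype2With μ r A C) :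
    BoundedWith μ r (Set.range T) C := by
  intro k S x hS
  choose n hn using hS
  have hS_le : ∀ i, S i (x i) ^ 2 ≤ ‖A (x i)‖ ^ 2 := fun i => by
    rw [sq_le_sq, abs_norm, ← hn i, ← hA, ← Real.norm_eq_abs]
    exact norm_le_pi_norm _ _
  calc √(∫ ω, ‖∑ i : Fin k, r i.1 ω • S i (x i)‖ ^ 2 ∂μ) = √(∑ i, S i (x i) ^ 2) := by
        rw [hr.integral_norm_sum_smul_sq]
    _ ≤ √(∑ i, ‖A (x i)‖ ^ 2) := Real.sqrt_le_sqrt (Finset.sum_le_sum fun i _ => hS_le i)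
    _ ≤ _ := h k x

theorem BoundedWith.cotype2With (hr : IsRademacherFam μ r)
    (hA : ∀ x n, A x n = T n x) (hC : 0 ≤ C) (h : BoundedWith μ r (Set.range T) C) :
    Cotype2With μ r A C := by
  intro k x
  cases isEmpty_or_nonempty ι
  · simp only [fun i => norm_of_subsingleton (A (x i)), ne_eq, OfNat.ofNat_ne_zero,
      not_false_eq_true, zero_pow, Finset.sum_const_zero, Real.sqrt_zero]
    positivity
  choose n hn using fun i => Pi.exists_norm_apply_eq_norm (A (x i))
  calc √(∑ i, ‖A (x i)‖ ^ 2) = √(∫ ω, ‖∑ i : Fin k, r i.1 ω • T (n i) (x i)‖ ^ 2 ∂μ) := by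
        rw [hr.integral_norm_sum_smul_sq]
        simp only [← hn, hA, Real.norm_eq_abs, sq_abs]
    _ ≤ _ := h k (fun i => T (n i)) x fun i => Set.mem_range_self _

end FunctionalFamily

/-- **Lemma 2.9 (Rademacher case).**  For functionals `T₁, …, T_N : ℓ^∞_M → ℝ`, with
`𝒯 = {T_n}` and `A : ℓ^∞_M → ℓ^∞_N` given by `A x = (T_n x)_n`, one has
`ℛ(𝒯) = C₂(A)`, the Rademacher cotype-2 constant of `A`. -/
theorem rBound_eq_rademacherCotype2Const
    {Ω : Type*} [MeasurableSpace Ω] (μ : Measure Ω) (r : ℕ → Ω → ℝ)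
    (hr : IsRademacherFam μ r) (M N : ℕ)
    (T : Fin N → (Fin M → ℝ) →L[ℝ] ℝ) (A : (Fin M → ℝ) →L[ℝ] (Fin N → ℝ))
    (hA : ∀ (x : Fin M → ℝ) (n : Fin N), A x n = T n x) :
    boundConst μ r (Set.range T) = cotype2Const μ r A := by
  unfold boundConst cotype2Const
  congr 1
  ext C
  exact ⟨fun ⟨hC, h⟩ => ⟨hC, h.cotype2With hr hA hC⟩,
    fun ⟨hC, h⟩ => ⟨hC, h.boundedWith_range hr hA⟩⟩

end
end

section
/- Let T_1,…,T_N : ℓ^∞_M → ℝ be bounded linear functionals, let 𝒯 = {T_n : 1 ≤ n ≤ N}, and let A : ℓ^∞_M → ℓ^∞_N be defined by A x = (T_1 x, …, T_N x). Then the γ-bound of 𝒯 equals the Gaussian cotype-2 constant of A: ℛ^γ(𝒯) = C_2^γ(A). -/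
open MeasureTheory ProbabilityTheory Filter ENNReal

noncomputable section

/-! For a standard Gaussian sequence and real scalars, `E|∑ γ_i a_i|² = ∑ a_i²`, since the `γ_i`
are orthonormal in `L²`. Hence `γ`-boundedness of `𝒯` bounds `(∑ |S_i x_i|²)^{1/2}` for all
choices `S_i ∈ 𝒯`, while cotype 2 of `A` bounds `(∑ ‖A x_i‖²)^{1/2}` with
`‖A x_i‖ = max_n |T_n x_i|`; choosing `S_i` to attain each maximum shows that the two conditions
admit the same constants. -/

theorem integral_sq_sum_mul_of_orthonormal {Ω ι : Type*} [MeasurableSpace Ω] {μ : Measure Ω}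
    [Fintype ι] [DecidableEq ι] {f : ι → Ω → ℝ}
    (hint : ∀ i j, Integrable (fun ω ↦ f i ω * f j ω) μ)
    (horth : ∀ i j, ∫ ω, f i ω * f j ω ∂μ = if i = j then 1 else 0) (a : ι → ℝ) :
    ∫ ω, (∑ i, a i * f i ω) ^ 2 ∂μ = ∑ i, a i ^ 2 := by
  have hexpand : ∀ ω, (∑ i, a i * f i ω) ^ 2 = ∑ i, ∑ j, a i * a j * (f i ω * f j ω) := by
    intro ω
    rw [sq, Finset.sum_mul_sum]
    exact Finset.sum_congr rfl fun i _ ↦ Finset.sum_congr rfl fun j _ ↦ by ring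
  simp_rw [hexpand]
  rw [integral_finsetSum _ fun i _ ↦ integrable_finsetSum _ fun j _ ↦ (hint i j).const_mul _]
  refine Finset.sum_congr rfl fun i _ ↦ ?_
  rw [integral_finsetSum _ fun j _ ↦ (hint i j).const_mul _]
  simp_rw [integral_const_mul, horth, mul_ite, mul_one, mul_zero, Finset.sum_ite_eq,
    Finset.mem_univ, if_true, sq]

namespace IsGaussianFam

variable {ι Ω : Type*} [MeasurableSpace Ω] {μ : Measure Ω} {ξ : ι → Ω → ℝ}

theorem memLp_two (hξ : IsGaussianFam μ ξ) (i : ι) : MemLp (ξ i) 2 μ := by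
  have h : MemLp id 2 (μ.map (ξ i)) := by
    rw [hξ.2.2.2 i]
    exact memLp_id_gaussianReal 2
  exact (memLp_map_measure_iff aestronglyMeasurable_id (hξ.2.1 i).aemeasurable).mp h

theorem integral_eq_zero (hξ : IsGaussianFam μ ξ) (i : ι) : ∫ ω, ξ i ω ∂μ = 0 := by
  rw [← integral_id_gaussianReal (μ := 0) (v := 1), ← hξ.2.2.2 i,
    integral_map (hξ.2.1 i).aemeasurable (f := fun x ↦ x) aestronglyMeasurable_id]

theorem integral_sq_eq_one (hξ : IsGaussianFam μ ξ) (i : ι) : ∫ ω, ξ i ω ^ 2 ∂μ = 1 := by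
  have h := variance_fun_id_gaussianReal (μ := 0) (v := 1)
  rw [← hξ.2.2.2 i, variance_map aemeasurable_id' (hξ.2.1 i).aemeasurable,
    Function.comp_def,
    variance_of_integral_eq_zero (hξ.2.1 i).aemeasurable (hξ.integral_eq_zero i)] at h
  exact_mod_cast h

theorem integrable_mul (hξ : IsGaussianFam μ ξ) (i j : ι) :
    Integrable (fun ω ↦ ξ i ω * ξ j ω) μ :=
  (hξ.memLp_two i).integrable_mul (hξ.memLp_two j)

theorem integral_mul [DecidableEq ι] (hξ : IsGaussianFam μ ξ) (i j : ι) :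
    ∫ ω, ξ i ω * ξ j ω ∂μ = if i = j then 1 else 0 := by
  split_ifs with hij
  · subst hij
    simpa only [sq] using hξ.integral_sq_eq_one i
  · rw [(hξ.2.2.1.indepFun hij).integral_fun_mul_eq_mul_integral
      (hξ.2.1 i).aestronglyMeasurable (hξ.2.1 j).aestronglyMeasurable,
      hξ.integral_eq_zero i, zero_mul]

theorem comp_injective {κ : Type*} {e : κ → ι} (hξ : IsGaussianFam μ ξ)
    (he : e.Injective) : IsGaussianFam μ (fun k ↦ ξ (e k)) :=
  ⟨hξ.1, fun k ↦ hξ.2.1 (e k), hξ.2.2.1.precomp he, fun k ↦ hξ.2.2.2 (e k)⟩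

theorem integral_sq_sum_mul [Fintype ι] (hξ : IsGaussianFam μ ξ) (a : ι → ℝ) :
    ∫ ω, (∑ i, a i * ξ i ω) ^ 2 ∂μ = ∑ i, a i ^ 2 := by
  classical
  exact integral_sq_sum_mul_of_orthonormal hξ.integrable_mul hξ.integral_mul a

theorem integral_norm_sum_smul_sq {g : ℕ → Ω → ℝ} (hg : IsGaussianFam μ g) {k : ℕ}
    (a : Fin k → ℝ) : ∫ ω, ‖∑ i : Fin k, g i.1 ω • a i‖ ^ 2 ∂μ = ∑ i, a i ^ 2 := by
  simp_rw [smul_eq_mul, Real.norm_eq_abs, sq_abs, mul_comm (g _ _)]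
  exact (hg.comp_injective Fin.val_injective).integral_sq_sum_mul a

theorem boundedWith_iff {X : Type*} [NormedAddCommGroup X] [NormedSpace ℝ X]
    {g : ℕ → Ω → ℝ} (hg : IsGaussianFam μ g) {𝒯 : Set (X →L[ℝ] ℝ)} {C : ℝ} :
    BoundedWith μ g 𝒯 C ↔ ∀ (k : ℕ) (S : Fin k → X →L[ℝ] ℝ) (x : Fin k → X), (∀ i, S i ∈ 𝒯) →
      √(∑ i, S i (x i) ^ 2) ≤ C * √(∫ ω, ‖∑ i : Fin k, g i.1 ω • x i‖ ^ 2 ∂μ) := by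
  simp only [BoundedWith, hg.integral_norm_sum_smul_sq]

end IsGaussianFam

theorem Pi.exists_norm_eq_norm_apply {ι E : Type*} [Fintype ι] [Nonempty ι]
    [SeminormedAddGroup E] (f : ι → E) : ∃ i, ‖f‖ = ‖f i‖ := by
  obtain ⟨i, -, hi⟩ := Finset.exists_max_image Finset.univ (fun i ↦ ‖f i‖) Finset.univ_nonempty
  exact ⟨i, le_antisymm ((pi_norm_le_iff_of_nonneg (norm_nonneg _)).2 fun j ↦
    hi j (Finset.mem_univ j)) (norm_le_pi_norm f i)⟩

theorem cotype2With_iff_of_apply_eq {X ι Ω : Type*} [NormedAddCommGroup X] [NormedSpace ℝ X]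
    [Fintype ι] [MeasurableSpace Ω] {μ : Measure Ω} {ξ : ℕ → Ω → ℝ} {T : ι → X →L[ℝ] ℝ}
    {A : X →L[ℝ] (ι → ℝ)} (hA : ∀ x i, A x i = T i x) {C : ℝ} (hC : 0 ≤ C) :
    Cotype2With μ ξ A C ↔ ∀ (k : ℕ) (S : Fin k → X →L[ℝ] ℝ) (x : Fin k → X),
      (∀ i, S i ∈ Set.range T) →
      √(∑ i, S i (x i) ^ 2) ≤ C * √(∫ ω, ‖∑ i : Fin k, ξ i.1 ω • x i‖ ^ 2 ∂μ) := by
  have hsq : ∀ x i, T i x ^ 2 = ‖A x i‖ ^ 2 := fun x i ↦ by rw [Real.norm_eq_abs, sq_abs, hA]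
  constructor
  · intro hAC k S x hS
    refine (Real.sqrt_le_sqrt (Finset.sum_le_sum fun i _ ↦ ?_)).trans (hAC k x)
    obtain ⟨n, hn⟩ := hS i
    rw [← hn, hsq]
    gcongr
    exact norm_le_pi_norm _ n
  · intro hST k x
    cases isEmpty_or_nonempty ι
    · simp only [Subsingleton.elim (A _) 0, norm_zero, ne_eq, OfNat.ofNat_ne_zero,
        not_false_eq_true, zero_pow, Finset.sum_const_zero, Real.sqrt_zero]
      positivity
    · choose n hn using fun i ↦ Pi.exists_norm_eq_norm_apply (A (x i))
      simpa only [hsq, hn] using hST k (fun i ↦ T (n i)) x fun i ↦ ⟨n i, rfl⟩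

/-- **Lemma 2.9 (Gaussian case).**  For functionals `T₁, …, T_N : ℓ^∞_M → ℝ`, with
`𝒯 = {T_n}` and `A : ℓ^∞_M → ℓ^∞_N` given by `A x = (T_n x)_n`, one has
`ℛ^γ(𝒯) = C₂^γ(A)`, the Gaussian cotype-2 constant of `A`. -/
theorem gammaBound_eq_gaussianCotype2Const
    {Ω : Type*} [MeasurableSpace Ω] (μ : Measure Ω) (g : ℕ → Ω → ℝ)
    (hg : IsGaussianFam μ g) (M N : ℕ)
    (T : Fin N → (Fin M → ℝ) →L[ℝ] ℝ) (A : (Fin M → ℝ) →L[ℝ] (Fin N → ℝ))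
    (hA : ∀ (x : Fin M → ℝ) (n : Fin N), A x n = T n x) :
    boundConst μ g (Set.range T) = cotype2Const μ g A := by
  unfold boundConst cotype2Const
  congr 1
  ext C
  exact and_congr_right fun hC ↦
    hg.boundedWith_iff.trans (cotype2With_iff_of_apply_eq hA hC).symm

end
end

section
/- Let n ≥ 1 and let x_1, …, x_n be real numbers. If γ_1, …, γ_n are independent standard Gaussian random variables, then ((log n)/n · ∑_{i=1}^n x_i²)^{1/2} ≤ 4 · E[max_{1≤i≤n} |γ_i x_i|]. -/
open MeasureTheory ProbabilityTheory Filter ENNReal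

noncomputable section

/-!
Let `E` be the expectation of `maxᵢ |γᵢ xᵢ|`. One coordinate alone gives
`E ≥ E|γᵢ| · |xᵢ| = √(2/π) |xᵢ|`.
If `m` coordinates satisfy `|xⱼ| ≥ c`, take `t = √(log m)`: on `[t, 2t]` the density `φ`
dominates `y φ(y) / 2t`, whose primitive is explicit, so `P(|γ| ≥ t) ≥ (φ(t) - φ(2t)) / t`,
which is `≥ 2/(3m)` once `t ≥ 1.9`. By independence one of the `m` Gaussians exceeds `t`
with probability `1 - (1 - P(|γ| ≥ t))^m ≥ 2/5`, hence `E ≥ (2/5) c √(log m)`; for smaller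
`m` the one-coordinate bound already gives this.

Applied to the coordinates at least as large as `xᵢ`, this bounds `xᵢ² log(rank of xᵢ)`.
At most `√n` coordinates have rank `≤ √n`, and every other one has `log(rank) ≥ (log n)/2`,
so `log n · ∑ xᵢ² ≤ (π + 25/2) n E² ≤ 16 n E²`.
-/

open Real Set Finset

theorem hasDerivAt_gaussianPDFReal (m : ℝ) (v : NNReal) (x : ℝ) :
    HasDerivAt (gaussianPDFReal m v) (-((x - m) / v) * gaussianPDFReal m v x) x := by
  have h := (((hasDerivAt_id x).sub_const m).fun_pow 2).fun_neg.div_const (2 * (v : ℝ))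
  refine (h.exp.const_mul (√(2 * π * v))⁻¹).congr_deriv ?_
  simp only [gaussianPDFReal, id]
  ring

theorem continuous_gaussianPDFReal (m : ℝ) (v : NNReal) : Continuous (gaussianPDFReal m v) :=
  continuous_iff_continuousAt.2 fun x ↦ (hasDerivAt_gaussianPDFReal m v x).continuousAt

theorem gaussianPDFReal_abs (v : NNReal) (x : ℝ) :
    gaussianPDFReal 0 v |x| = gaussianPDFReal 0 v x := by
  simp [gaussianPDFReal]

theorem tendsto_gaussianPDFReal_atTop (m : ℝ) {v : NNReal} (hv : v ≠ 0) :
    Tendsto (gaussianPDFReal m v) atTop (nhds 0) := by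
  have h : Tendsto (fun x ↦ -(x - m) ^ 2 / (2 * v)) atTop atBot :=
    (tendsto_neg_atTop_atBot.comp ((tendsto_pow_atTop two_ne_zero).comp
      (tendsto_atTop_add_const_right _ (-m) tendsto_id))).atBot_div_const (by positivity)
  have h' := (tendsto_exp_atBot.comp h).const_mul (√(2 * π * v))⁻¹
  rw [mul_zero] at h'
  exact h'

theorem integral_abs_gaussianReal : ∫ y, |y| ∂gaussianReal 0 1 = √(2 / π) := by
  have hφ0 : gaussianPDFReal 0 1 0 = (√(2 * π))⁻¹ := by simp [gaussianPDFReal]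
  calc ∫ y, |y| ∂gaussianReal 0 1 = ∫ y, (fun u ↦ gaussianPDFReal 0 1 u * u) |y| := by
        rw [integral_gaussianReal_eq_integral_smul one_ne_zero]
        simp only [gaussianPDFReal_abs, smul_eq_mul]
    _ = 2 * ∫ u in Ioi 0, gaussianPDFReal 0 1 u * u :=
        integral_comp_abs (f := fun u ↦ gaussianPDFReal 0 1 u * u)
    _ = 2 * (0 - -gaussianPDFReal 0 1 0) := by
        congr 1
        refine integral_Ioi_of_hasDerivAt_of_nonneg' (g := fun u ↦ -gaussianPDFReal 0 1 u)
          (fun u _ ↦ ?_) (fun u hu ↦ ?_) ?_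
        · exact (hasDerivAt_gaussianPDFReal 0 1 u).neg.congr_deriv (by simp [mul_comm])
        · exact mul_nonneg (gaussianPDFReal_nonneg _ _ _) hu.le
        · simpa using (tendsto_gaussianPDFReal_atTop 0 one_ne_zero).neg
    _ = √(2 / π) := by
        rw [zero_sub, neg_neg, hφ0, sqrt_div' _ pi_pos.le, sqrt_mul zero_le_two]
        field_simp
        exact (sq_sqrt zero_le_two).symm

theorem gaussianReal_real_Icc (m : ℝ) {v : NNReal} (hv : v ≠ 0) {a b : ℝ} (hab : a ≤ b) :
    (gaussianReal m v).real (Icc a b) = ∫ y in a..b, gaussianPDFReal m v y := by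
  rw [measureReal_def, gaussianReal_apply_eq_integral m hv,
    ENNReal.toReal_ofReal
      (setIntegral_nonneg measurableSet_Icc fun y _ ↦ gaussianPDFReal_nonneg m v y),
    integral_Icc_eq_integral_Ioc, intervalIntegral.integral_of_le hab]

theorem integral_mul_gaussianPDFReal (a b : ℝ) :
    ∫ y in a..b, y * gaussianPDFReal 0 1 y = gaussianPDFReal 0 1 a - gaussianPDFReal 0 1 b := by
  rw [intervalIntegral.integral_eq_sub_of_hasDerivAt (f := fun y ↦ -gaussianPDFReal 0 1 y)
    (fun y _ ↦ (hasDerivAt_gaussianPDFReal 0 1 y).neg.congr_deriv (by simp))]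
  · ring
  · exact ((continuous_id.mul (continuous_gaussianPDFReal 0 1))).intervalIntegrable _ _

theorem gaussianPDFReal_sub_div_le_gaussianReal_tail {t : ℝ} (ht : 0 < t) :
    (gaussianPDFReal 0 1 t - gaussianPDFReal 0 1 (2 * t)) / t ≤
      (gaussianReal 0 1).real {y | t ≤ |y|} := by
  set φ := gaussianPDFReal 0 1
  have hφ : Continuous φ := continuous_gaussianPDFReal 0 1
  have hright : (φ t - φ (2 * t)) / (2 * t) ≤ (gaussianReal 0 1).real (Icc t (2 * t)) := by
    rw [gaussianReal_real_Icc 0 one_ne_zero (by linarith), ← integral_mul_gaussianPDFReal,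
      ← intervalIntegral.integral_div]
    refine intervalIntegral.integral_mono_on (by linarith)
      (((continuous_id.mul hφ).div_const _).intervalIntegrable _ _) (hφ.intervalIntegrable _ _) ?_
    intro y hy
    rw [div_le_iff₀ (by positivity), mul_comm]
    exact mul_le_mul_of_nonneg_left hy.2 (gaussianPDFReal_nonneg _ _ _)
  have hleft : (gaussianReal 0 1).real (Icc (-(2 * t)) (-t)) =
      (gaussianReal 0 1).real (Icc t (2 * t)) := by
    rw [gaussianReal_real_Icc 0 one_ne_zero (by linarith),
      gaussianReal_real_Icc 0 one_ne_zero (by linarith), ← intervalIntegral.integral_comp_neg]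
    simp [gaussianPDFReal]
  have hsub : Icc (-(2 * t)) (-t) ∪ Icc t (2 * t) ⊆ {y | t ≤ |y|} := by
    rintro y (hy | hy) <;> simp only [Set.mem_Icc, Set.mem_ofPred_eq, le_abs] at hy ⊢ <;> grind
  have hdisj : Disjoint (Icc (-(2 * t)) (-t)) (Icc t (2 * t)) :=
    Set.disjoint_left.2 fun y h₁ h₂ ↦ by linarith [h₁.2, h₂.1]
  calc (φ t - φ (2 * t)) / t = 2 * ((φ t - φ (2 * t)) / (2 * t)) := by field_simp
    _ ≤ _ := by linarith
    _ = (gaussianReal 0 1).real (Icc (-(2 * t)) (-t) ∪ Icc t (2 * t)) :=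
        (measureReal_union hdisj measurableSet_Icc).symm
    _ ≤ _ := measureReal_mono hsub

theorem two_div_three_mul_exp_neg_sq_le_gaussianReal_tail {t : ℝ} (ht : 19 / 10 ≤ t) :
    2 / 3 * exp (-t ^ 2) ≤ (gaussianReal 0 1).real {y | t ≤ |y|} := by
  have ht0 : 0 < t := by linarith
  refine le_trans ?_ (gaussianPDFReal_sub_div_le_gaussianReal_tail ht0)
  have hexp : 1 + t ^ 2 / 2 + (t ^ 2 / 2) ^ 2 / 2 ≤ exp (t ^ 2 / 2) :=
    quadratic_le_exp_of_nonneg (by positivity)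
  have hneg : exp (-t ^ 2) ≤ 1 := exp_le_one_iff.2 (by nlinarith)
  have hpoly : 2 / 3 * (13 / 5) * t ≤ t ^ 2 / 2 + (t ^ 2 / 2) ^ 2 / 2 := by
    have h₁ : 19 / 10 * t ≤ t ^ 2 := by nlinarith
    have h₂ : (19 / 10) ^ 2 * t ^ 2 ≤ t ^ 4 := by nlinarith
    nlinarith
  have hsplit : exp (-t ^ 2 / 2) - exp (-(2 * t) ^ 2 / 2) =
      exp (-t ^ 2) * (exp (t ^ 2 / 2) - exp (-t ^ 2)) := by
    rw [mul_sub, ← exp_add, ← exp_add]; ring_nf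
  have hkey : 2 / 3 * t * √(2 * π) ≤ exp (t ^ 2 / 2) - exp (-t ^ 2) := by
    have hs : √(2 * π) ≤ 13 / 5 := sqrt_le_iff.2 ⟨by norm_num, by nlinarith [pi_lt_d2]⟩
    nlinarith [mul_le_mul_of_nonneg_left hs (by positivity : 0 ≤ 2 / 3 * t)]
  simp only [gaussianPDFReal, NNReal.coe_one, mul_one, sub_zero]
  rw [← mul_sub, hsplit, le_div_iff₀ ht0, inv_mul_eq_div, le_div_iff₀ (by positivity)]
  nlinarith [mul_le_mul_of_nonneg_left hkey (exp_pos (-t ^ 2)).le]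

theorem ProbabilityTheory.iIndepFun.measureReal_biUnion_preimage {ι Ω α : Type*}
    [MeasurableSpace Ω] [MeasurableSpace α] {μ : Measure Ω} [IsProbabilityMeasure μ]
    {ν : Measure α} [IsProbabilityMeasure ν] {g : ι → Ω → α}
    (hind : iIndepFun g μ) (hmeas : ∀ i, Measurable (g i)) (hlaw : ∀ i, μ.map (g i) = ν)
    (S : Finset ι) {B : Set α} (hB : MeasurableSet B) :
    μ.real (⋃ i ∈ S, g i ⁻¹' B) = 1 - (1 - ν.real B) ^ #S := by
  have hU : MeasurableSet (⋃ i ∈ S, g i ⁻¹' B) :=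
    S.measurableSet_biUnion fun i _ ↦ hmeas i hB
  have hinter : μ.real (⋂ i ∈ S, g i ⁻¹' Bᶜ) = ν.real Bᶜ ^ #S := by
    rw [measureReal_def, hind.meas_biInter fun i _ ↦ ⟨Bᶜ, hB.compl, rfl⟩,
      ENNReal.toReal_prod, Finset.prod_congr rfl fun i _ ↦ ?_, Finset.prod_const]
    rw [← measureReal_def, ← map_measureReal_apply (hmeas i) hB.compl, hlaw i]
  have hcompl : ⋂ i ∈ S, g i ⁻¹' Bᶜ = (⋃ i ∈ S, g i ⁻¹' B)ᶜ := by
    simp only [Set.compl_iUnion₂, Set.preimage_compl]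
  rw [← probReal_compl_eq_one_sub hB, ← hinter, hcompl, probReal_compl_eq_one_sub hU]
  ring

namespace IsGaussianFam

variable {ι Ω : Type*} [MeasurableSpace Ω] {μ : Measure Ω} {g : ι → Ω → ℝ}

theorem integral_abs (hg : IsGaussianFam μ g) (i : ι) : ∫ ω, |g i ω| ∂μ = √(2 / π) := by
  rw [← integral_abs_gaussianReal, ← hg.2.2.2 i,
    integral_map (hg.2.1 i).aemeasurable continuous_abs.aestronglyMeasurable]

theorem integrable (hg : IsGaussianFam μ g) (i : ι) : Integrable (g i) μ := by
  have h : Integrable id (gaussianReal 0 1) := (memLp_id_gaussianReal 1).integrable le_rfl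
  rw [← hg.2.2.2 i] at h
  exact (integrable_map_measure aestronglyMeasurable_id (hg.2.1 i).aemeasurable).1 h

theorem integrable_iSup_abs_mul [Fintype ι] (hg : IsGaussianFam μ g) (x : ι → ℝ) :
    Integrable (fun ω ↦ ⨆ i, |g i ω * x i|) μ := by
  refine (integrable_finsetSum univ fun i _ ↦ ((hg.integrable i).mul_const (x i)).abs).mono'
    (Measurable.iSup fun i ↦ ((hg.2.1 i).mul_const (x i)).abs).aestronglyMeasurable
    (ae_of_all _ fun ω ↦ ?_)
  rw [norm_of_nonneg (Real.iSup_nonneg fun i ↦ abs_nonneg _)]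
  exact Real.iSup_le (fun i ↦ single_le_sum (fun j _ ↦ abs_nonneg (g j ω * x j)) (mem_univ i))
    (sum_nonneg fun j _ ↦ abs_nonneg _)

theorem abs_mul_sqrt_two_div_pi_le_integral [Fintype ι] (hg : IsGaussianFam μ g) (x : ι → ℝ)
    (i : ι) :
    |x i| * √(2 / π) ≤ ∫ ω, ⨆ j, |g j ω * x j| ∂μ := by
  calc |x i| * √(2 / π) = ∫ ω, |g i ω * x i| ∂μ := by
        simp_rw [abs_mul, integral_mul_const, hg.integral_abs, mul_comm]
    _ ≤ _ := integral_mono ((hg.integrable i).mul_const (x i)).abs (hg.integrable_iSup_abs_mul x)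
        fun ω ↦ le_ciSup (f := fun j ↦ |g j ω * x j|) (Finite.bddAbove_range _) i

theorem mul_one_sub_pow_le_integral [Fintype ι] (hg : IsGaussianFam μ g) (x : ι → ℝ)
    (S : Finset ι) {c t : ℝ} (hc : 0 ≤ c) (hcS : ∀ i ∈ S, c ≤ |x i|) (ht : 0 ≤ t) :
    c * t * (1 - (1 - (gaussianReal 0 1).real {y | t ≤ |y|}) ^ #S) ≤
      ∫ ω, ⨆ j, |g j ω * x j| ∂μ := by
  have ⟨_, hmeas, hind, hlaw⟩ := hg
  have hsub :
      ⋃ i ∈ S, g i ⁻¹' {y | t ≤ |y|} ⊆ {ω | c * t ≤ ⨆ j, |g j ω * x j|} := by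
    intro ω hω
    obtain ⟨i, hi, hti⟩ := Set.mem_iUnion₂.1 hω
    calc c * t ≤ |x i| * |g i ω| := mul_le_mul (hcS i hi) hti ht (abs_nonneg _)
      _ = |g i ω * x i| := by rw [abs_mul, mul_comm]
      _ ≤ _ := le_ciSup (f := fun j ↦ |g j ω * x j|) (Finite.bddAbove_range _) i
  rw [← hind.measureReal_biUnion_preimage hmeas hlaw S
    (measurableSet_le measurable_const measurable_abs)]
  calc _ ≤ c * t * μ.real {ω | c * t ≤ ⨆ j, |g j ω * x j|} :=
        mul_le_mul_of_nonneg_left (measureReal_mono hsub) (by positivity)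
    _ ≤ _ := mul_meas_ge_le_integral_of_nonneg
        (ae_of_all _ fun ω ↦ Real.iSup_nonneg fun j ↦ abs_nonneg _)
        (hg.integrable_iSup_abs_mul x) _

theorem mul_sqrt_log_card_le_integral_of_log_le [Fintype ι] (hg : IsGaussianFam μ g)
    (x : ι → ℝ) (S : Finset ι) {c : ℝ} (hc : 0 ≤ c) (hcS : ∀ i ∈ S, c ≤ |x i|)
    (hlog : Real.log #S ≤ (19 / 10) ^ 2) :
    c * √(Real.log #S) ≤ 5 / 2 * ∫ ω, ⨆ j, |g j ω * x j| ∂μ := by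
  rcases S.eq_empty_or_nonempty with rfl | ⟨j, hj⟩
  · simp only [Finset.card_empty, Nat.cast_zero, Real.log_zero, sqrt_zero, mul_zero]
    exact mul_nonneg (by norm_num)
      (integral_nonneg fun ω ↦ Real.iSup_nonneg fun j ↦ abs_nonneg _)
  have hsqrt : √(Real.log #S) ≤ 19 / 10 := sqrt_le_iff.2 ⟨by norm_num, hlog⟩
  have hpi : 19 / 25 ≤ √(2 / π) :=
    (le_sqrt' (by norm_num)).2 (by rw [le_div_iff₀ pi_pos]; nlinarith [pi_lt_d2])
  calc c * √(Real.log #S) ≤ c * (5 / 2 * √(2 / π)) :=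
        mul_le_mul_of_nonneg_left (by linarith) hc
    _ ≤ 5 / 2 * (|x j| * √(2 / π)) := by nlinarith [hcS j hj, sqrt_nonneg (2 / π)]
    _ ≤ _ := by gcongr; exact hg.abs_mul_sqrt_two_div_pi_le_integral x j

theorem mul_sqrt_log_card_le_integral_of_le_log [Fintype ι] (hg : IsGaussianFam μ g)
    (x : ι → ℝ) (S : Finset ι) {c : ℝ} (hc : 0 ≤ c) (hcS : ∀ i ∈ S, c ≤ |x i|)
    (hlog : (19 / 10) ^ 2 ≤ Real.log #S) :
    c * √(Real.log #S) ≤ 5 / 2 * ∫ ω, ⨆ j, |g j ω * x j| ∂μ := by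
  have hm : (0 : ℝ) < #S := Nat.cast_pos.2 <| Nat.pos_of_ne_zero fun h ↦ by
    simp only [h, Nat.cast_zero, Real.log_zero] at hlog; linarith
  set t := √(Real.log #S)
  have ht : 19 / 10 ≤ t := (le_sqrt' (by norm_num)).2 hlog
  set p := (gaussianReal 0 1).real {y | t ≤ |y|}
  have hp : 2 / 3 ≤ #S * p := by
    have h := two_div_three_mul_exp_neg_sq_le_gaussianReal_tail ht
    rw [sq_sqrt (by linarith), exp_neg, exp_log hm] at h
    calc (2 / 3 : ℝ) = #S * (2 / 3 * (#S : ℝ)⁻¹) := by field_simp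
      _ ≤ #S * p := by gcongr
  have hpow : (1 - p) ^ #S ≤ 3 / 5 :=
    calc (1 - p) ^ #S ≤ exp (-p) ^ #S :=
          pow_le_pow_left₀ (sub_nonneg.2 measureReal_le_one) (one_sub_le_exp_neg p) _
      _ = exp (-(#S * p)) := by rw [← exp_nat_mul, mul_neg]
      _ ≤ exp (-(2 / 3)) := exp_le_exp.2 (by linarith)
      _ ≤ 3 / 5 := by
          rw [exp_neg, inv_le_comm₀ (exp_pos _) (by norm_num)]
          linarith [add_one_le_exp (2 / 3 : ℝ)]
  calc c * t = 5 / 2 * (c * t * (1 - 3 / 5)) := by ring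
    _ ≤ 5 / 2 * (c * t * (1 - (1 - p) ^ #S)) := by gcongr
    _ ≤ _ := by gcongr; exact hg.mul_one_sub_pow_le_integral x S hc hcS (by positivity)

theorem mul_sqrt_log_card_le_integral [Fintype ι] (hg : IsGaussianFam μ g) (x : ι → ℝ)
    (S : Finset ι) {c : ℝ} (hc : 0 ≤ c) (hcS : ∀ i ∈ S, c ≤ |x i|) :
    c * √(Real.log #S) ≤ 5 / 2 * ∫ ω, ⨆ j, |g j ω * x j| ∂μ :=
  (le_total (Real.log #S) ((19 / 10) ^ 2)).elim
    (hg.mul_sqrt_log_card_le_integral_of_log_le x S hc hcS)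
    (hg.mul_sqrt_log_card_le_integral_of_le_log x S hc hcS)

end IsGaussianFam

section Rank

variable {ι : Type*} [Fintype ι]

def absRank (x : ι → ℝ) (i : ι) : ℕ := #{j | |x i| ≤ |x j|}

theorem one_le_absRank (x : ι → ℝ) (i : ι) : 1 ≤ absRank x i :=
  Finset.card_pos.2 ⟨i, by simp⟩

theorem card_absRank_le (x : ι → ℝ) (k : ℕ) : #{i | absRank x i ≤ k} ≤ k := by
  set T := ({i | absRank x i ≤ k} : Finset ι)
  rcases T.eq_empty_or_nonempty with hT | hT
  · simp [hT]
  obtain ⟨i, hi, hmin⟩ := T.exists_min_image (fun j ↦ |x j|) hT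
  calc #T ≤ absRank x i := card_le_card fun j hj ↦ by simpa using hmin j hj
    _ ≤ k := (mem_filter.1 hi).2

theorem nat_sqrt_mul_log_le (n : ℕ) : (Nat.sqrt n : ℝ) * Real.log n ≤ 2 * n := by
  rcases Nat.eq_zero_or_pos n with rfl | hn
  · simp
  have hn' : (0 : ℝ) < n := by exact_mod_cast hn
  have hlog : Real.log n ≤ 2 * √n := by
    have := log_le_sub_one_of_pos (sqrt_pos.2 hn')
    rw [log_sqrt hn'.le] at this
    linarith
  calc (Nat.sqrt n : ℝ) * Real.log n ≤ √n * (2 * √n) := by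
        gcongr
        exact nat_sqrt_le_real_sqrt
    _ = 2 * n := by rw [mul_left_comm, mul_self_sqrt hn'.le]

theorem log_card_mul_sum_sq_le (x : ι → ℝ) {C₁ C₂ : ℝ} (h₁ : ∀ i, x i ^ 2 ≤ C₁)
    (h₂ : ∀ i, Real.log (absRank x i) * x i ^ 2 ≤ C₂) :
    Real.log (Fintype.card ι) * ∑ i, x i ^ 2 ≤ 2 * Fintype.card ι * (C₁ + C₂) := by
  classical
  rcases isEmpty_or_nonempty ι with hι | ⟨⟨i₀⟩⟩
  · simp
  set n := Fintype.card ι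
  have hn1 : (1 : ℝ) ≤ n := by exact_mod_cast Fintype.card_pos_iff.2 ⟨i₀⟩
  have hn : (0 : ℝ) < n := by linarith
  have hlogn : 0 ≤ Real.log n := Real.log_nonneg hn1
  have hC₁ : 0 ≤ C₁ := (sq_nonneg _).trans (h₁ i₀)
  have hlog_rank : ∀ i, 0 ≤ Real.log (absRank x i) := fun i ↦
    Real.log_nonneg (by exact_mod_cast one_le_absRank x i)
  have hC₂ : 0 ≤ C₂ := (mul_nonneg (hlog_rank i₀) (sq_nonneg _)).trans (h₂ i₀)
  set T := ({i | absRank x i ≤ Nat.sqrt n} : Finset ι)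
  have hsmall : #T * Real.log n ≤ 2 * n :=
    (mul_le_mul_of_nonneg_right (Nat.cast_le.2 (card_absRank_le x _)) hlogn).trans
      (nat_sqrt_mul_log_le n)
  have hlarge : ∀ i ∉ T, Real.log n ≤ 2 * Real.log (absRank x i) := by
    intro i hi
    have : n < absRank x i ^ 2 := Nat.sqrt_lt'.1 (by simpa [T] using hi)
    calc Real.log n ≤ Real.log ((absRank x i : ℝ) ^ 2) :=
          Real.log_le_log hn (by exact_mod_cast this.le)
      _ = 2 * Real.log (absRank x i) := by rw [Real.log_pow]; norm_num
  rw [mul_sum, ← sum_add_sum_compl T]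
  have hT : ∑ i ∈ T, Real.log n * x i ^ 2 ≤ 2 * n * C₁ :=
    calc ∑ i ∈ T, Real.log n * x i ^ 2 ≤ ∑ i ∈ T, Real.log n * C₁ :=
          sum_le_sum fun i _ ↦ mul_le_mul_of_nonneg_left (h₁ i) hlogn
      _ = #T * Real.log n * C₁ := by rw [sum_const, nsmul_eq_mul, mul_assoc]
      _ ≤ 2 * n * C₁ := by gcongr
  have hTc : ∑ i ∈ Tᶜ, Real.log n * x i ^ 2 ≤ 2 * n * C₂ :=
    calc ∑ i ∈ Tᶜ, Real.log n * x i ^ 2 ≤ ∑ i ∈ Tᶜ, 2 * C₂ :=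
          sum_le_sum fun i hi ↦ by
            nlinarith [hlarge i (mem_compl.1 hi), h₂ i, sq_nonneg (x i)]
      _ ≤ ∑ i, 2 * C₂ :=
          sum_le_sum_of_subset_of_nonneg (subset_univ _) fun _ _ _ ↦ by positivity
      _ = 2 * n * C₂ := by rw [sum_const, nsmul_eq_mul, card_univ]; ring
  linarith

end Rank

theorem sqrt_log_div_n_sum_sq_le_four_mul_expectation_max_general
    {Ω : Type*} [MeasurableSpace Ω] (μ : Measure Ω) (n : ℕ)
    (g : Fin n → Ω → ℝ) (hg : IsGaussianFam μ g) (x : Fin n → ℝ) :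
    Real.sqrt (Real.log n / n * ∑ i, x i ^ 2) ≤ 4 * ∫ ω, ⨆ i, |g i ω * x i| ∂μ := by
  set E := ∫ ω, ⨆ i, |g i ω * x i| ∂μ
  have hE : 0 ≤ E := integral_nonneg fun ω ↦ Real.iSup_nonneg fun i ↦ abs_nonneg _
  have h₁ : ∀ i, x i ^ 2 ≤ π / 2 * E ^ 2 := fun i ↦ by
    have h := pow_le_pow_left₀ (by positivity) (hg.abs_mul_sqrt_two_div_pi_le_integral x i) 2
    rw [mul_pow, sq_abs, sq_sqrt (by positivity)] at h
    calc x i ^ 2 = π / 2 * (x i ^ 2 * (2 / π)) := by field_simp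
      _ ≤ π / 2 * E ^ 2 := by gcongr
  have h₂ : ∀ i, Real.log (absRank x i) * x i ^ 2 ≤ 25 / 4 * E ^ 2 := fun i ↦ by
    have h := pow_le_pow_left₀ (by positivity) (hg.mul_sqrt_log_card_le_integral x
      {j | |x i| ≤ |x j|} (abs_nonneg _) fun j hj ↦ (mem_filter.1 hj).2) 2
    rw [mul_pow, mul_pow, sq_abs,
      sq_sqrt (Real.log_nonneg (by exact_mod_cast one_le_absRank x i))] at h
    rw [absRank]
    linarith [h]
  have hsum := log_card_mul_sum_sq_le x h₁ h₂
  rw [Fintype.card_fin] at hsum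
  refine sqrt_le_iff.2 ⟨by positivity, ?_⟩
  rcases Nat.eq_zero_or_pos n with rfl | hn
  · simp only [Nat.cast_zero, Real.log_zero, zero_div, zero_mul]
    positivity
  rw [div_mul_eq_mul_div, div_le_iff₀ (by positivity)]
  calc Real.log n * ∑ i, x i ^ 2 ≤ 2 * n * (π / 2 * E ^ 2 + 25 / 4 * E ^ 2) := hsum
    _ = (π + 25 / 2) * (n * E ^ 2) := by ring
    _ ≤ 16 * (n * E ^ 2) := by gcongr; linarith [pi_lt_d2]
    _ = (4 * E) ^ 2 * n := by ring

/-- **Lemma 3.2.**  For `n ≥ 1`, real numbers `x₁, …, xₙ` and independent standard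
Gaussians `γ₁, …, γₙ`, one has `((log n / n) ∑ xᵢ²)^{1/2} ≤ 4 E[maxᵢ |γᵢ xᵢ|]`. -/
theorem sqrt_log_div_n_sum_sq_le_four_mul_expectation_max
    {Ω : Type*} [MeasurableSpace Ω] (μ : Measure Ω) (n : ℕ) (hn : 1 ≤ n)
    (g : Fin n → Ω → ℝ) (hg : IsGaussianFam μ g) (x : Fin n → ℝ) :
    Real.sqrt (Real.log n / n * ∑ i, x i ^ 2) ≤ 4 * ∫ ω, ⨆ i, |g i ω * x i| ∂μ :=
  sqrt_log_div_n_sum_sq_le_four_mul_expectation_max_general μ n g hg x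

end
end

section
/- Let T_n : c_0 → ℝ be the coordinate functionals T_n x = x_n. Then for all N ≥ 2, the γ-bound of {T_n : 1 ≤ n ≤ N} satisfies ℛ^γ({T_n : 1 ≤ n ≤ N}) ≥ (N / (2 log(2N)))^{1/2}. -/
open MeasureTheory ProbabilityTheory Filter ENNReal

noncomputable section

/-!
Test the γ-bound on the functionals `Tₙ₊₁` paired with the unit vectors `eₙ₊₁`, `n < N`.
The left side is `E |g₀ + ⋯ + g_{N-1}|² = N`. The right side is `E maxₙ gₙ²`, and for `s ≥ 1`
`E maxₙ gₙ² ≤ s² + ∑ₙ E (gₙ² - s²)⁺ ≤ s² + 2N φ(s)` by the Gaussian tail estimate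
`E (g² - s²)⁺ ≤ 2 φ(s)` for the standard Gaussian density `φ`; the choice
`s² = 2 log (2N) - 1` makes this at most `2 log (2N)`.
-/

open Real Set Topology

lemma gaussianPDFReal_zero_one (x : ℝ) :
    gaussianPDFReal 0 1 x = (√(2 * π))⁻¹ * rexp (-x ^ 2 / 2) := by
  simp [gaussianPDFReal]

lemma gaussianPDFReal_zero_one_abs (x : ℝ) : gaussianPDFReal 0 1 |x| = gaussianPDFReal 0 1 x := by
  simp only [gaussianPDFReal_zero_one, sq_abs]

lemma hasDerivAt_gaussianPDFReal_zero_one (x : ℝ) :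
    HasDerivAt (gaussianPDFReal 0 1) (-x * gaussianPDFReal 0 1 x) x := by
  rw [show gaussianPDFReal 0 1 = fun y => (√(2 * π))⁻¹ * rexp (-y ^ 2 / 2) from
    funext gaussianPDFReal_zero_one]
  have h : HasDerivAt (fun y : ℝ => -y ^ 2 / 2) (-x) x := by
    simpa [neg_div] using (hasDerivAt_pow 2 x).neg.div_const 2
  exact (h.exp.const_mul _).congr_deriv (by ring)

lemma tendsto_pow_mul_gaussianPDFReal_zero_one_atTop (n : ℕ) :
    Tendsto (fun x => x ^ n * gaussianPDFReal 0 1 x) atTop (𝓝 0) := by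
  have h := ((tendsto_rpow_abs_mul_exp_neg_mul_sq_cocompact one_half_pos n).mono_left
    atTop_le_cocompact).const_mul (√(2 * π))⁻¹
  rw [mul_zero] at h
  refine h.congr' ?_
  filter_upwards [eventually_ge_atTop 0] with x hx
  rw [gaussianPDFReal_zero_one, abs_of_nonneg hx, Real.rpow_natCast,
    show -(1 / 2 : ℝ) * x ^ 2 = -x ^ 2 / 2 by ring]
  ring

/-- With `c = s²(1 - s²)/(s² + 1)`, `F x = -(x + c / x) φ(x)` is an antiderivative of a function
dominating `(x² - s²) φ(x)` on `(s, ∞)`, and `-F s = 2s/(s² + 1) φ(s) ≤ φ(s)`; with `c = 0` one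
would only get the weaker bound `s φ(s)`. -/
lemma setIntegral_Ioi_sq_sub_sq_mul_gaussianPDFReal_le {s : ℝ} (hs : 1 ≤ s) :
    ∫ x in Ioi s, (x ^ 2 - s ^ 2) * gaussianPDFReal 0 1 x ≤ gaussianPDFReal 0 1 s := by
  set φ := gaussianPDFReal 0 1
  set c := s ^ 2 * (1 - s ^ 2) / (s ^ 2 + 1)
  set F : ℝ → ℝ := fun x => -((x + c * x⁻¹) * φ x)
  set D : ℝ → ℝ := fun x => (x ^ 2 + c - 1 + c * (x ^ 2)⁻¹) * φ x
  have hφ : ∀ x, 0 ≤ φ x := gaussianPDFReal_nonneg 0 1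
  have hderiv : ∀ x ∈ Ici s, HasDerivAt F (D x) x := by
    intro x hx
    have hx0 : x ≠ 0 := by linarith [mem_Ici.1 hx]
    have h : HasDerivAt (fun y => y + c * y⁻¹) (1 + c * -(x ^ 2)⁻¹) x :=
      (hasDerivAt_id' x).add ((hasDerivAt_inv hx0).const_mul c)
    refine (h.mul (hasDerivAt_gaussianPDFReal_zero_one x)).neg.congr_deriv ?_
    simp only [D]
    field_simp
    ring
  have hdom : ∀ x ∈ Ioi s, (x ^ 2 - s ^ 2) * φ x ≤ D x := by
    intro x hx
    have hsx : s ^ 2 ≤ x ^ 2 := by nlinarith [mem_Ioi.1 hx]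
    have hx2 : 0 < x ^ 2 := by nlinarith
    have key : c + s ^ 2 - 1 + c * (x ^ 2)⁻¹ = (s ^ 2 - 1) / (s ^ 2 + 1) * (1 - s ^ 2 / x ^ 2) := by
      simp only [c]; field_simp; ring
    have hnn : 0 ≤ (s ^ 2 - 1) / (s ^ 2 + 1) * (1 - s ^ 2 / x ^ 2) :=
      mul_nonneg (div_nonneg (by nlinarith) (by positivity))
        (sub_nonneg.2 ((div_le_one hx2).2 hsx))
    exact mul_le_mul_of_nonneg_right (by linarith) (hφ x)
  have hD_nonneg : ∀ x ∈ Ioi s, 0 ≤ D x := fun x hx =>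
    (mul_nonneg (by nlinarith [mem_Ioi.1 hx]) (hφ x)).trans (hdom x hx)
  have hF : Tendsto F atTop (𝓝 0) := by
    have h := (tendsto_pow_mul_gaussianPDFReal_zero_one_atTop 1).add
      ((tendsto_inv_atTop_zero.const_mul c).mul (tendsto_pow_mul_gaussianPDFReal_zero_one_atTop 0))
    simp only [mul_zero, add_zero, pow_one, pow_zero, one_mul] at h
    simpa [F, add_mul, mul_assoc] using h.neg
  have hendpoint : s + c * s⁻¹ = 2 * s / (s ^ 2 + 1) := by
    simp only [c]; field_simp; ring
  calc ∫ x in Ioi s, (x ^ 2 - s ^ 2) * φ x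
      ≤ ∫ x in Ioi s, D x :=
        integral_mono_of_nonneg
          ((ae_restrict_mem measurableSet_Ioi).mono fun x hx =>
            mul_nonneg (by nlinarith [mem_Ioi.1 hx]) (hφ x))
          (integrableOn_Ioi_deriv_of_nonneg' hderiv hD_nonneg hF)
          ((ae_restrict_mem measurableSet_Ioi).mono hdom)
    _ = 2 * s / (s ^ 2 + 1) * φ s := by
        rw [integral_Ioi_of_hasDerivAt_of_nonneg' hderiv hD_nonneg hF, ← hendpoint]
        simp only [F]; ring
    _ ≤ φ s := by
        refine mul_le_of_le_one_left (hφ s) ((div_le_one (by positivity)).2 ?_)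
        nlinarith [sq_nonneg (s - 1)]

lemma integral_max_sq_sub_sq_gaussianReal_le {s : ℝ} (hs : 1 ≤ s) :
    ∫ x, max (x ^ 2 - s ^ 2) 0 ∂gaussianReal 0 1 ≤ 2 * gaussianPDFReal 0 1 s := by
  set h : ℝ → ℝ := fun x => gaussianPDFReal 0 1 x * max (x ^ 2 - s ^ 2) 0
  have hvanish : ∀ x ∈ Ioi 0 \ Ioi s, h x = 0 := by
    rintro x ⟨hx0, hxs⟩
    rw [mem_Ioi] at hx0 hxs
    have : x ^ 2 ≤ s ^ 2 := by nlinarith [not_lt.1 hxs]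
    simp [h, max_eq_right (sub_nonpos.2 this)]
  have hIoi : ∫ x in Ioi s, h x = ∫ x in Ioi s, (x ^ 2 - s ^ 2) * gaussianPDFReal 0 1 x :=
    setIntegral_congr_fun measurableSet_Ioi fun x hx => by
      have : s ^ 2 ≤ x ^ 2 := by nlinarith [mem_Ioi.1 hx]
      simp only [h, max_eq_left (sub_nonneg.2 this), mul_comm]
  calc ∫ x, max (x ^ 2 - s ^ 2) 0 ∂gaussianReal 0 1 = ∫ x, h |x| := by
        rw [integral_gaussianReal_eq_integral_smul one_ne_zero]
        simp only [h, smul_eq_mul, gaussianPDFReal_zero_one_abs, sq_abs]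
    _ = 2 * ∫ x in Ioi s, h x := by
        rw [integral_comp_abs,
          setIntegral_eq_of_subset_of_forall_sdiff_eq_zero measurableSet_Ioi
            (Ioi_subset_Ioi (by linarith)) hvanish]
    _ ≤ 2 * gaussianPDFReal 0 1 s := by
        rw [hIoi]
        linarith [setIntegral_Ioi_sq_sub_sq_mul_gaussianPDFReal_le hs]

lemma two_mul_mul_gaussianPDFReal_sqrt_le {x : ℝ} (hx : 1 ≤ x) :
    2 * x * gaussianPDFReal 0 1 √(2 * Real.log (2 * x) - 1) ≤ 1 := by
  have hlog : 1 / 2 ≤ Real.log (2 * x) := by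
    linarith [log_two_gt_d9, log_le_log two_pos (by linarith : (2 : ℝ) ≤ 2 * x)]
  have hexp : rexp (1 / 2) ≤ √(2 * π) := by
    rw [exp_half]
    exact sqrt_le_sqrt (by linarith [exp_one_lt_d9, pi_gt_three])
  rw [gaussianPDFReal_zero_one, sq_sqrt (by linarith),
    show -(2 * Real.log (2 * x) - 1) / 2 = 1 / 2 - Real.log (2 * x) by ring,
    exp_sub, exp_log (by positivity)]
  field_simp
  exact hexp

section GaussianFamily

variable {ι Ω : Type*} [MeasurableSpace Ω] {μ : Measure Ω} {g : ι → Ω → ℝ}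

lemma IsGaussianFam.hasLaw (hg : IsGaussianFam μ g) (i : ι) :
    HasLaw (g i) (gaussianReal 0 1) μ :=
  ⟨(hg.2.1 i).aemeasurable, hg.2.2.2 i⟩

lemma IsGaussianFam.comp_injective_s11 {κ : Type*} (hg : IsGaussianFam μ g) {e : κ → ι}
    (he : Function.Injective e) : IsGaussianFam μ (fun j => g (e j)) :=
  ⟨hg.1, fun j => hg.2.1 (e j), hg.2.2.1.precomp he, fun j => hg.2.2.2 (e j)⟩

lemma IsGaussianFam.memLp_two_s11 (hg : IsGaussianFam μ g) (i : ι) : MemLp (g i) 2 μ := by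
  have h := memLp_id_gaussianReal (μ := 0) (v := 1) 2
  rw [← (hg.hasLaw i).map_eq] at h
  exact (memLp_map_measure_iff aestronglyMeasurable_id (hg.hasLaw i).aemeasurable).1 h

lemma IsGaussianFam.integral_sq_sum [Fintype ι] (hg : IsGaussianFam μ g) :
    ∫ ω, (∑ i, g i ω) ^ 2 ∂μ = Fintype.card ι := by
  have := hg.1
  have hmean : μ[∑ i, g i] = 0 := by
    rw [Finset.sum_fn, integral_finsetSum _ fun i _ => (hg.memLp_two_s11 i).integrable one_le_two]
    simp [(hg.hasLaw _).integral_eq, integral_id_gaussianReal]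
  have hvar := IndepFun.variance_sum (s := Finset.univ) (fun i _ => hg.memLp_two_s11 i)
    (fun i _ j _ hij => hg.2.2.1.indepFun hij)
  rw [variance_of_integral_eq_zero (Finset.aemeasurable_sum _ fun i _ => (hg.hasLaw i).aemeasurable)
    hmean] at hvar
  simpa [(hg.hasLaw _).variance_eq, variance_id_gaussianReal] using hvar

lemma IsGaussianFam.integrable_max_sq_sub (hg : IsGaussianFam μ g) (i : ι) (t : ℝ) :
    Integrable (fun ω => max (g i ω ^ 2 - t) 0) μ :=
  have := hg.1
  ((hg.memLp_two_s11 i).integrable_sq.sub (integrable_const t)).pos_part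

lemma IsGaussianFam.integral_max_sq_sub_sq_le (hg : IsGaussianFam μ g) (i : ι) {s : ℝ}
    (hs : 1 ≤ s) : ∫ ω, max (g i ω ^ 2 - s ^ 2) 0 ∂μ ≤ 2 * gaussianPDFReal 0 1 s := by
  have h := (hg.hasLaw i).integral_comp (f := fun x => max (x ^ 2 - s ^ 2) 0) (by fun_prop)
  exact h.trans_le (integral_max_sq_sub_sq_gaussianReal_le hs)

end GaussianFamily

section CZero

open ZeroAtInfty

lemma ZeroAtInftyContinuousMap.sum_apply {α β ι : Type*} [TopologicalSpace α]
    [TopologicalSpace β] [AddCommMonoid β] [ContinuousAdd β] (s : Finset ι) (f : ι → C₀(α, β))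
    (m : α) : (∑ i ∈ s, f i) m = ∑ i ∈ s, f i m := by
  classical
  induction s using Finset.induction_on with
  | empty => rfl
  | insert i s hi ih => rw [Finset.sum_insert hi, Finset.sum_insert hi, add_apply, ih]

variable {α : Type*} [TopologicalSpace α] [DiscreteTopology α] [DecidableEq α]

def c0Basis (k : α) : C₀(α, ℝ) where
  toFun m := if m = k then 1 else 0
  continuous_toFun := continuous_of_discreteTopology
  zero_at_infty' := by
    rw [cocompact_eq_cofinite]
    refine tendsto_const_nhds.congr' ?_
    filter_upwards [eventually_cofinite_ne k] with m hm
    simp [hm]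

@[simp]
lemma c0Basis_apply (k m : α) : c0Basis k m = if m = k then 1 else 0 := rfl

lemma norm_sum_smul_c0Basis_le {ι : Type*} [Fintype ι] {k : ι → α} (hk : Function.Injective k)
    (a : ι → ℝ) {M : ℝ} (hM : 0 ≤ M) (ha : ∀ i, |a i| ≤ M) :
    ‖∑ i, a i • c0Basis (k i)‖ ≤ M := by
  rw [← ZeroAtInftyContinuousMap.norm_toBCF_eq_norm]
  refine (BoundedContinuousFunction.norm_le hM).2 fun m => ?_
  change ‖(∑ i, a i • c0Basis (k i)) m‖ ≤ M
  simp only [ZeroAtInftyContinuousMap.sum_apply, ZeroAtInftyContinuousMap.smul_apply,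
    c0Basis_apply, smul_eq_mul, mul_ite, mul_one, mul_zero, Real.norm_eq_abs]
  by_cases hm : ∃ i, k i = m
  · obtain ⟨i, rfl⟩ := hm
    rw [Finset.sum_eq_single i (fun j _ hji => if_neg (hk.ne hji).symm) (by simp), if_pos rfl]
    exact ha i
  · rw [Finset.sum_eq_zero fun i _ => if_neg fun (h : m = k i) => hm ⟨i, h.symm⟩, abs_zero]
    exact hM

lemma norm_sum_smul_c0Basis_sq_le {ι : Type*} [Fintype ι] {k : ι → α}
    (hk : Function.Injective k) (a : ι → ℝ) {t : ℝ} (ht : 0 ≤ t) :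
    ‖∑ i, a i • c0Basis (k i)‖ ^ 2 ≤ t + ∑ i, max (a i ^ 2 - t) 0 := by
  have hsum : 0 ≤ ∑ i, max (a i ^ 2 - t) 0 := Finset.sum_nonneg fun i _ => le_max_right _ _
  have ha : ∀ i, |a i| ≤ √(t + ∑ i, max (a i ^ 2 - t) 0) := fun i =>
    abs_le_sqrt (by
      linarith [le_max_left (a i ^ 2 - t) 0,
        Finset.single_le_sum (fun j _ => le_max_right (a j ^ 2 - t) 0) (Finset.mem_univ i)])
  exact (le_sqrt (norm_nonneg _) (by positivity)).1
    (norm_sum_smul_c0Basis_le hk a (sqrt_nonneg _) ha)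

end CZero

lemma IsGaussianFam.integral_norm_sum_smul_c0Basis_sq_le {ι Ω α : Type*} [Fintype ι]
    [MeasurableSpace Ω] {μ : Measure Ω} {g : ι → Ω → ℝ} [TopologicalSpace α] [DiscreteTopology α]
    [DecidableEq α] (hg : IsGaussianFam μ g) {k : ι → α} (hk : Function.Injective k)
    (hι : 2 ≤ Fintype.card ι) :
    ∫ ω, ‖∑ i, g i ω • c0Basis (k i)‖ ^ 2 ∂μ ≤ 2 * Real.log (2 * (Fintype.card ι : ℝ)) := by
  have := hg.1
  have hn : (2 : ℝ) ≤ Fintype.card ι := by exact_mod_cast hι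
  set n : ℝ := (Fintype.card ι : ℝ)
  have hlog : 1 ≤ Real.log (2 * n) := by
    rw [le_log_iff_exp_le (by positivity)]
    linarith [exp_one_lt_d9]
  -- chosen so that `2 n φ(s) = e^{1/2} / √(2π) ≤ 1`
  set s := √(2 * Real.log (2 * n) - 1)
  have hs2 : s ^ 2 = 2 * Real.log (2 * n) - 1 := sq_sqrt (by linarith)
  have hs : 1 ≤ s := (le_sqrt zero_le_one (by linarith)).2 (by linarith)
  have hint : Integrable (fun ω => s ^ 2 + ∑ i, max (g i ω ^ 2 - s ^ 2) 0) μ :=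
    (integrable_const _).add (integrable_finsetSum _ fun i _ => hg.integrable_max_sq_sub i _)
  calc ∫ ω, ‖∑ i, g i ω • c0Basis (k i)‖ ^ 2 ∂μ
      ≤ ∫ ω, (s ^ 2 + ∑ i, max (g i ω ^ 2 - s ^ 2) 0) ∂μ :=
        integral_mono_of_nonneg (ae_of_all _ fun ω => by positivity) hint
          (ae_of_all _ fun ω => norm_sum_smul_c0Basis_sq_le hk _ (sq_nonneg s))
    _ = s ^ 2 + ∑ i, ∫ ω, max (g i ω ^ 2 - s ^ 2) 0 ∂μ := by
        rw [integral_add (integrable_const _)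
          (integrable_finsetSum _ fun i _ => hg.integrable_max_sq_sub i _),
          integral_finsetSum _ fun i _ => hg.integrable_max_sq_sub i _]
        simp
    _ ≤ s ^ 2 + ∑ _i : ι, 2 * gaussianPDFReal 0 1 s := by
        gcongr with i
        exact hg.integral_max_sq_sub_sq_le i hs
    _ ≤ 2 * Real.log (2 * n) := by
        have := two_mul_mul_gaussianPDFReal_sqrt_le (x := n) (by linarith)
        simp only [Finset.sum_const, Finset.card_univ, nsmul_eq_mul]
        nlinarith

open ZeroAtInfty in
/-- **Lemma 3.4 (lower bound).**  Let `Tₙ x = xₙ` be the coordinate functionals on `c₀`.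
Then for `N ≥ 2`, `ℛ^γ({Tₙ : 1 ≤ n ≤ N}) ≥ (N / (2 log(2N)))^{1/2}`: every admissible
`γ`-boundedness constant `C` of the family is at least this value. -/
theorem gammaBound_coordinate_functionals_ge
    {Ω : Type*} [MeasurableSpace Ω] (μ : Measure Ω) (g : ℕ → Ω → ℝ)
    (hg : IsGaussianFam μ g)
    (T : ℕ → C₀(ℕ, ℝ) →L[ℝ] ℝ) (hT : ∀ (n : ℕ) (x : C₀(ℕ, ℝ)), T n x = x n)
    (N : ℕ) (hN : 2 ≤ N) :
    ∀ C : ℝ, 0 ≤ C → BoundedWith μ g (T '' {n : ℕ | 1 ≤ n ∧ n ≤ N}) C →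
      Real.sqrt (N / (2 * Real.log (2 * N))) ≤ C := by
  intro C hC hbound
  have hγ : IsGaussianFam μ (fun n : Fin N => g n.1) := hg.comp_injective_s11 Fin.val_injective
  have hshift : Function.Injective fun n : Fin N => n.1 + 1 :=
    (add_left_injective 1).comp Fin.val_injective
  have key := hbound N (fun n => T (n.1 + 1)) (fun n => c0Basis (n.1 + 1))
    fun n => ⟨n.1 + 1, ⟨Nat.le_add_left 1 n.1, n.isLt⟩, rfl⟩
  have hlhs : ∫ ω, ‖∑ n : Fin N, g n.1 ω • T (n.1 + 1) (c0Basis (n.1 + 1))‖ ^ 2 ∂μ = N := by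
    simpa [hT] using hγ.integral_sq_sum
  have hrhs := hγ.integral_norm_sum_smul_c0Basis_sq_le hshift (by simpa using hN)
  rw [Fintype.card_fin] at hrhs
  have hL : 0 < 2 * Real.log (2 * N) := by
    have : (1 : ℝ) < 2 * N := by norm_cast; omega
    linarith [Real.log_pos this]
  beta_reduce at key
  rw [hlhs] at key
  rw [sqrt_div' _ hL.le, div_le_iff₀ (sqrt_pos.2 hL)]
  exact key.trans (mul_le_mul_of_nonneg_left (sqrt_le_sqrt hrhs) hC)
end
end
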